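/- arXiv:2509.09675 — 4 statements merged into one kernel-verified Lean document; each statement's English description precedes it below -/
import Mathlib

section
/- (Calibration, correct responses.) If o₁, o₂ ∈ O are both correct, i.e. r(o₁) = r(o₂) = 1, and o₁ has per-token perplexity at least that of o₂, i.e. −(α/T(o₁))·log π_t(o₁) ≥ −(α/T(o₂))·log π_t(o₂), then Δ_t(o₁) − Δ_t(o₂) = η·(b_t(o₁) − b_t(o₂)) ≥ 0; that is, among correct responses the higher-perplexity trajectory receives a larger relative probability increase under the Gibbs update. -/
/- Context: a finite nonempty set `O` of responses, a probability distribution `πt` on `O`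
with `πt o > 0`, a correctness reward `r : O → {−1, 1}`, a length function `T : O → ℕ` with
`T o ≥ 1`, parameters `α, κ, η > 0`, the perplexity bonus
`b o = min(κ, −(α / T o)·log πt o)`, the shaped reward `rt o = r o + b o`, the normalizer
`Z = Σ_{o'} πt o' · exp(η · rt o')`, the updated (Gibbs) policy
`πnext o = πt o · exp(η · rt o) / Z`, and the log-likelihood change
`Δ o = log πnext o − log πt o`. -/

/-- Calibration, correct responses: if `r o₁ = r o₂ = 1` and `o₁` has
per-token perplexity at least that of `o₂`, then
`Δ o₁ − Δ o₂ = η·(b o₁ − b o₂) ≥ 0`. -/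
theorem calibration_correct_responses
    {O : Type*} [Fintype O] [Nonempty O]
    (πt : O → ℝ) (hπt_pos : ∀ o, 0 < πt o) (hπt_sum : ∑ o, πt o = 1)
    (r : O → ℝ) (hr : ∀ o, r o = 1 ∨ r o = -1)
    (T : O → ℕ) (hT : ∀ o, 1 ≤ T o)
    (α κ η : ℝ) (hα : 0 < α) (hκ : 0 < κ) (hη : 0 < η)
    (b : O → ℝ) (hb : ∀ o, b o = min κ (-(α / (T o : ℝ)) * Real.log (πt o)))
    (rt : O → ℝ) (hrt : ∀ o, rt o = r o + b o)
    (Z : ℝ) (hZ : Z = ∑ o', πt o' * Real.exp (η * rt o'))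
    (πnext : O → ℝ) (hπnext : ∀ o, πnext o = πt o * Real.exp (η * rt o) / Z)
    (Δ : O → ℝ) (hΔ : ∀ o, Δ o = Real.log (πnext o) - Real.log (πt o))
    (o₁ o₂ : O) (h₁ : r o₁ = 1) (h₂ : r o₂ = 1)
    (hppl : -(α / (T o₂ : ℝ)) * Real.log (πt o₂) ≤ -(α / (T o₁ : ℝ)) * Real.log (πt o₁)) :
    Δ o₁ - Δ o₂ = η * (b o₁ - b o₂) ∧ 0 ≤ Δ o₁ - Δ o₂ := by
  have hZpos : 0 < Z := by
    rw [hZ]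
    exact Finset.sum_pos (fun o _ => mul_pos (hπt_pos o) (Real.exp_pos _)) Finset.univ_nonempty
  have hΔ' : ∀ o, Δ o = η * rt o - Real.log Z := by
    intro o
    rw [hΔ, hπnext, Real.log_div (ne_of_gt (mul_pos (hπt_pos o) (Real.exp_pos _))) (ne_of_gt hZpos),
      Real.log_mul (ne_of_gt (hπt_pos o)) (Real.exp_ne_zero _), Real.log_exp]
    ring
  have heq : Δ o₁ - Δ o₂ = η * (b o₁ - b o₂) := by
    rw [hΔ' o₁, hΔ' o₂, hrt, hrt, h₁, h₂]; ring
  refine ⟨heq, heq ▸ ?_⟩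
  have : b o₂ ≤ b o₁ := by
    rw [hb, hb]
    exact min_le_min le_rfl hppl
  nlinarith
end

section
/- (Calibration, incorrect responses.) If o₁, o₂ ∈ O are both incorrect, i.e. r(o₁) = r(o₂) = −1, and o₁ has per-token perplexity at least that of o₂, i.e. −(α/T(o₁))·log π_t(o₁) ≥ −(α/T(o₂))·log π_t(o₂), then Δ_t(o₁) − Δ_t(o₂) = η·(b_t(o₁) − b_t(o₂)) ≥ 0; that is, among incorrect responses the lower-perplexity (more confident) trajectory receives a larger relative probability decrease under the Gibbs update. -/
/- Context: a finite nonempty set `O` of responses, a probability distribution `πt` on `O`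
with `πt o > 0`, a correctness reward `r : O → {−1, 1}`, a length function `T : O → ℕ` with
`T o ≥ 1`, parameters `α, κ, η > 0`, the perplexity bonus
`b o = min(κ, −(α / T o)·log πt o)`, the shaped reward `rt o = r o + b o`, the normalizer
`Z = Σ_{o'} πt o' · exp(η · rt o')`, the updated (Gibbs) policy
`πnext o = πt o · exp(η · rt o) / Z`, and the log-likelihood change
`Δ o = log πnext o − log πt o`. -/

/-- Calibration, incorrect responses: if `r o₁ = r o₂ = −1` and `o₁` has
per-token perplexity at least that of `o₂`, then
`Δ o₁ − Δ o₂ = η·(b o₁ − b o₂) ≥ 0`; i.e. the lower-perplexity (more confident)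
incorrect trajectory receives a larger relative probability decrease. -/
theorem calibration_incorrect_responses
    {O : Type*} [Fintype O] [Nonempty O]
    (πt : O → ℝ) (hπt_pos : ∀ o, 0 < πt o) (hπt_sum : ∑ o, πt o = 1)
    (r : O → ℝ) (hr : ∀ o, r o = 1 ∨ r o = -1)
    (T : O → ℕ) (hT : ∀ o, 1 ≤ T o)
    (α κ η : ℝ) (hα : 0 < α) (hκ : 0 < κ) (hη : 0 < η)
    (b : O → ℝ) (hb : ∀ o, b o = min κ (-(α / (T o : ℝ)) * Real.log (πt o)))
    (rt : O → ℝ) (hrt : ∀ o, rt o = r o + b o)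
    (Z : ℝ) (hZ : Z = ∑ o', πt o' * Real.exp (η * rt o'))
    (πnext : O → ℝ) (hπnext : ∀ o, πnext o = πt o * Real.exp (η * rt o) / Z)
    (Δ : O → ℝ) (hΔ : ∀ o, Δ o = Real.log (πnext o) - Real.log (πt o))
    (o₁ o₂ : O) (h₁ : r o₁ = -1) (h₂ : r o₂ = -1)
    (hppl : -(α / (T o₂ : ℝ)) * Real.log (πt o₂) ≤ -(α / (T o₁ : ℝ)) * Real.log (πt o₁)) :
    Δ o₁ - Δ o₂ = η * (b o₁ - b o₂) ∧ 0 ≤ Δ o₁ - Δ o₂ := by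
  have hZpos : 0 < Z := by
    rw [hZ]
    exact Finset.sum_pos (fun o _ => mul_pos (hπt_pos o) (Real.exp_pos _))
      Finset.univ_nonempty
  have key : ∀ o, Δ o = η * rt o - Real.log Z := by
    intro o
    rw [hΔ, hπnext, Real.log_div (ne_of_gt (mul_pos (hπt_pos o) (Real.exp_pos _))) (ne_of_gt hZpos),
      Real.log_mul (ne_of_gt (hπt_pos o)) (Real.exp_ne_zero _), Real.log_exp]
    ring
  have hbb : b o₂ ≤ b o₁ := by
    rw [hb, hb]
    exact min_le_min le_rfl hppl
  constructor
  · rw [key, key, hrt, hrt, h₁, h₂]; ring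
  · rw [key, key, hrt, hrt, h₁, h₂]
    nlinarith
end

section
/- (Impossibility of the crossed case.) If o₁, o₂ ∈ O have the same correctness label, r(o₁) = r(o₂), and o₁ has per-token perplexity at least that of o₂, i.e. −(α/T(o₁))·log π_t(o₁) ≥ −(α/T(o₂))·log π_t(o₂), then it is impossible that simultaneously r̃_t(o₁) < (1/η)·log Z and r̃_t(o₂) ≥ (1/η)·log Z; equivalently, it cannot happen that the higher-perplexity response's probability strictly decreases while the lower-perplexity response's probability does not decrease. -/
/- Context: a finite nonempty set `O` of responses, a probability distribution `πt` on `O`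
with `πt o > 0`, a correctness reward `r : O → {−1, 1}`, a length function `T : O → ℕ` with
`T o ≥ 1`, parameters `α, κ, η > 0`, the perplexity bonus
`b o = min(κ, −(α / T o)·log πt o)`, the shaped reward `rt o = r o + b o`, the normalizer
`Z = Σ_{o'} πt o' · exp(η · rt o')`, the updated (Gibbs) policy
`πnext o = πt o · exp(η · rt o) / Z`, and the log-likelihood change
`Δ o = log πnext o − log πt o`. -/

/-- Impossibility of the crossed case: if `r o₁ = r o₂` and `o₁` has
per-token perplexity at least that of `o₂`, then it cannot happen that simultaneously
`rt o₁ < (1/η)·log Z` and `rt o₂ ≥ (1/η)·log Z`. -/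
theorem crossed_case_impossible
    {O : Type*} [Fintype O] [Nonempty O]
    (πt : O → ℝ) (hπt_pos : ∀ o, 0 < πt o) (hπt_sum : ∑ o, πt o = 1)
    (r : O → ℝ) (hr : ∀ o, r o = 1 ∨ r o = -1)
    (T : O → ℕ) (hT : ∀ o, 1 ≤ T o)
    (α κ η : ℝ) (hα : 0 < α) (hκ : 0 < κ) (hη : 0 < η)
    (b : O → ℝ) (hb : ∀ o, b o = min κ (-(α / (T o : ℝ)) * Real.log (πt o)))
    (rt : O → ℝ) (hrt : ∀ o, rt o = r o + b o)
    (Z : ℝ) (hZ : Z = ∑ o', πt o' * Real.exp (η * rt o'))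
    (πnext : O → ℝ) (hπnext : ∀ o, πnext o = πt o * Real.exp (η * rt o) / Z)
    (Δ : O → ℝ) (hΔ : ∀ o, Δ o = Real.log (πnext o) - Real.log (πt o))
    (o₁ o₂ : O) (hlabel : r o₁ = r o₂)
    (hppl : -(α / (T o₂ : ℝ)) * Real.log (πt o₂) ≤ -(α / (T o₁ : ℝ)) * Real.log (πt o₁)) :
    ¬ (rt o₁ < (1 / η) * Real.log Z ∧ (1 / η) * Real.log Z ≤ rt o₂) := by
  rintro ⟨h1, h2⟩
  have hble : b o₂ ≤ b o₁ := by
    rw [hb, hb]; exact min_le_min le_rfl hppl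
  have : rt o₂ ≤ rt o₁ := by rw [hrt, hrt, hlabel]; linarith
  linarith
end

section
/- (Variance of the bootstrap deviation under sampling without replacement.) The random variable D = φᵀ Λ⁻¹ ( (1/ζ) Σ_{i∈S} φ_i ε_i − Σ_{i=1}^n φ_i ε_i ) has mean zero and variance E[D²] = ((1 − ζ)/ζ) · σ² · φᵀ Λ⁻¹ (Σ_{i=1}^n φ_i φ_iᵀ) Λ⁻¹ φ. -/
/-!
Write `a i = φᵀ Λ⁻¹ φ_i`. Then `D = ∑ i, C_i ε_i` with `C_i = (1_{i ∈ S} / ζ - 1) a_i`, a function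
of `S` alone, hence independent of the noise vector. So `E D = 0`, and since the `ε_i` are
uncorrelated with variance `σ²`, `E D² = σ² ∑ i, E C_i²`. Every index lies in `S` with probability
`C(n-1, m-1) / C(n, m) = ζ`, so `E (1_{i ∈ S} / ζ - 1)² = (1 - ζ) / ζ`. Finally `∑ i, a_i²` is the
quadratic form on the right because `Λ`, hence `Λ⁻¹`, is symmetric.
-/

open Matrix MeasureTheory ProbabilityTheory
open scoped ENNReal

/-- Discrete measurable-space structure on finite sets of indices, used to speak of the
random subset `S` as a measurable map. -/
instance instMeasurableSpaceFinsetFin (n : ℕ) : MeasurableSpace (Finset (Fin n)) := ⊤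

open Finset

section LinearAlgebra

variable {ι d : Type*} [Fintype ι] [Fintype d]

lemma dotProduct_mulVec_smul_sum_sub_sum [DecidableEq ι] (w : d → ℝ) (M : Matrix d d ℝ)
    (u : ι → d → ℝ) (x : ι → ℝ) (s : Finset ι) (t : ℝ) :
    w ⬝ᵥ (M *ᵥ (t • ∑ i ∈ s, x i • u i - ∑ i, x i • u i))
      = ∑ i, (t * (if i ∈ s then 1 else 0) - 1) * (w ⬝ᵥ (M *ᵥ u i)) * x i := by
  simp only [mulVec_sub, mulVec_smul, mulVec_sum, dotProduct_sub, dotProduct_smul,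
    dotProduct_sum, smul_eq_mul, mul_sum]
  rw [← Fintype.sum_ite_mem, ← sum_sub_distrib]
  refine sum_congr rfl fun i _ => ?_
  split_ifs <;> ring

lemma Matrix.IsSymm.dotProduct_mulVec_sum_vecMulVec_mulVec {M : Matrix d d ℝ} (hM : M.IsSymm)
    (w : d → ℝ) (u : ι → d → ℝ) :
    w ⬝ᵥ (M *ᵥ ((∑ i, vecMulVec (u i) (u i)) *ᵥ (M *ᵥ w))) = ∑ i, (w ⬝ᵥ (M *ᵥ u i)) ^ 2 := by
  have hsymm : ∀ v, v ⬝ᵥ (M *ᵥ w) = w ⬝ᵥ (M *ᵥ v) := fun v => by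
    rw [dotProduct_mulVec, dotProduct_comm, ← mulVec_transpose, hM.eq]
  simp only [sum_mulVec, vecMulVec_mulVec, op_smul_eq_smul, mulVec_sum, mulVec_smul,
    dotProduct_sum, dotProduct_smul, smul_eq_mul, hsymm, sq]

omit [Fintype d] in
lemma isSymm_smul_one_add_sum_vecMulVec [DecidableEq d] (r : ℝ) (u : ι → d → ℝ) :
    (r • (1 : Matrix d d ℝ) + ∑ i, vecMulVec (u i) (u i)).IsSymm := by
  simp [IsSymm, transpose_sum, transpose_vecMulVec]

end LinearAlgebra

section Probability

variable {Ω : Type*} [MeasurableSpace Ω] {μ : Measure Ω}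

section FiniteValued

variable {α : Type*} [MeasurableSpace α] [DiscreteMeasurableSpace α] {S : Ω → α}

lemma integral_comp_eq_sum_measureReal [Fintype α] [IsFiniteMeasure μ] (hS : Measurable S)
    (g : α → ℝ) : ∫ ω, g (S ω) ∂μ = ∑ a, μ.real (S ⁻¹' {a}) * g a := by
  rw [← integral_map hS.aemeasurable Measurable.of_discrete.aestronglyMeasurable,
    integral_fintype Integrable.of_finite]
  simp [map_measureReal_apply hS (measurableSet_singleton _)]

lemma memLp_comp_of_finite [Finite α] [IsFiniteMeasure μ] (hS : Measurable S) (g : α → ℝ)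
    (p : ℝ≥0∞) : MemLp (fun ω => g (S ω)) p μ := by
  obtain ⟨c, hc⟩ := Finite.exists_le fun a => ‖g a‖
  exact .of_bound (Measurable.of_discrete.comp hS).aestronglyMeasurable c
    (ae_of_all _ fun ω => hc (S ω))

end FiniteValued

lemma integral_sq_one_div_mul_sub_one_of_sq_eq_self [IsProbabilityMeasure μ] {X : Ω → ℝ}
    (hX : Integrable X μ) (hX2 : ∀ ω, X ω ^ 2 = X ω) {p : ℝ} (hp : p ≠ 0)
    (hXp : ∫ ω, X ω ∂μ = p) : ∫ ω, (1 / p * X ω - 1) ^ 2 ∂μ = (1 - p) / p := by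
  have h : ∀ ω, (1 / p * X ω - 1) ^ 2 = (1 / p ^ 2 - 2 / p) * X ω + 1 := fun ω => by
    linear_combination (1 / p ^ 2) * hX2 ω
  simp_rw [h]
  rw [integral_add (hX.const_mul _) (integrable_const _), integral_const_mul, hXp,
    integral_const, probReal_univ, one_smul]
  field_simp
  ring

lemma ProbabilityTheory.iIndepFun.integral_mul_eq_ite {ι : Type*} [DecidableEq ι]
    {ε : ι → Ω → ℝ} (h : iIndepFun ε μ) (hε : ∀ i, AEStronglyMeasurable (ε i) μ) {σ : ℝ}
    (hmean : ∀ i, ∫ ω, ε i ω ∂μ = 0) (hvar : ∀ i, ∫ ω, ε i ω ^ 2 ∂μ = σ ^ 2) (i j : ι) :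
    ∫ ω, ε i ω * ε j ω ∂μ = if i = j then σ ^ 2 else 0 := by
  split_ifs with hij
  · subst hij
    simpa only [sq] using hvar i
  · change ∫ ω, (ε i * ε j) ω ∂μ = 0
    rw [(h.indepFun hij).integral_mul_eq_mul_integral (hε i) (hε j), hmean, zero_mul]

section RandomlyWeightedNoise

variable {ι : Type*} [Fintype ι] {C ε : ι → Ω → ℝ}

lemma integral_sum_mul_eq_zero_of_indepFun
    (hCε : IndepFun (fun ω i => C i ω) (fun ω i => ε i ω) μ)
    (hC : ∀ i, Integrable (C i) μ) (hε : ∀ i, Integrable (ε i) μ)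
    (hmean : ∀ i, ∫ ω, ε i ω ∂μ = 0) :
    ∫ ω, ∑ i, C i ω * ε i ω ∂μ = 0 := by
  have hind : ∀ i, IndepFun (C i) (ε i) μ := fun i =>
    hCε.comp (measurable_pi_apply i) (measurable_pi_apply i)
  have hint : ∀ i, Integrable (fun ω => C i ω * ε i ω) μ := fun i =>
    (hind i).integrable_mul (hC i) (hε i)
  rw [integral_finsetSum _ fun i _ => hint i]
  refine sum_eq_zero fun i _ => ?_
  change ∫ ω, (C i * ε i) ω ∂μ = 0
  rw [(hind i).integral_mul_eq_mul_integral (hC i).1 (hε i).1, hmean, mul_zero]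

lemma integral_sq_sum_mul_of_indepFun [DecidableEq ι]
    (hCε : IndepFun (fun ω i => C i ω) (fun ω i => ε i ω) μ)
    (hC : ∀ i, MemLp (C i) 2 μ) (hε : ∀ i, MemLp (ε i) 2 μ) {σ : ℝ}
    (hcorr : ∀ i j, ∫ ω, ε i ω * ε j ω ∂μ = if i = j then σ ^ 2 else 0) :
    ∫ ω, (∑ i, C i ω * ε i ω) ^ 2 ∂μ = σ ^ 2 * ∑ i, ∫ ω, C i ω ^ 2 ∂μ := by
  have hind : ∀ i j, IndepFun (C i * C j) (ε i * ε j) μ := fun i j =>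
    hCε.comp ((measurable_pi_apply i).mul (measurable_pi_apply j))
      ((measurable_pi_apply i).mul (measurable_pi_apply j))
  have hint : ∀ i j, Integrable (C i * C j * (ε i * ε j)) μ := fun i j =>
    (hind i j).integrable_mul ((hC i).integrable_mul (hC j)) ((hε i).integrable_mul (hε j))
  have hterm : ∀ i j, ∫ ω, (C i * C j * (ε i * ε j)) ω ∂μ
      = (∫ ω, C i ω * C j ω ∂μ) * ∫ ω, ε i ω * ε j ω ∂μ := fun i j =>
    (hind i j).integral_mul_eq_mul_integral ((hC i).1.mul (hC j).1) ((hε i).1.mul (hε j).1)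
  calc ∫ ω, (∑ i, C i ω * ε i ω) ^ 2 ∂μ
      = ∫ ω, ∑ i, ∑ j, (C i * C j * (ε i * ε j)) ω ∂μ := by
        congr 1 with ω
        simp only [sq, sum_mul_sum, Pi.mul_apply]
        exact sum_congr rfl fun i _ => sum_congr rfl fun j _ => by ring
    _ = ∑ i, ∑ j, (∫ ω, C i ω * C j ω ∂μ) * ∫ ω, ε i ω * ε j ω ∂μ := by
        rw [integral_finsetSum _ fun i _ => integrable_finsetSum _ fun j _ => hint i j]
        simp only [integral_finsetSum _ fun j _ => hint _ j, hterm]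
    _ = σ ^ 2 * ∑ i, ∫ ω, C i ω ^ 2 ∂μ := by
        simp [hcorr, mul_sum, sq, mul_comm]

end RandomlyWeightedNoise

end Probability

section UniformSubset

instance (n : ℕ) : DiscreteMeasurableSpace (Finset (Fin n)) :=
  ⟨fun _ => MeasurableSpace.measurableSet_top⟩

lemma card_filter_mem_and_card_eq {α : Type*} [Fintype α] [DecidableEq α] {m : ℕ} (hm : 1 ≤ m)
    (a : α) : #{s : Finset α | a ∈ s ∧ #s = m} = (Fintype.card α - 1).choose (m - 1) := by
  have h := card_filter_powersetCard_subset {a} univ m (subset_univ _) (by simpa using hm)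
  rw [card_univ, card_singleton] at h
  convert h using 2
  ext s
  simp [and_comm]

lemma Nat.choose_pred_div_choose {n m : ℕ} (hm : 1 ≤ m) (hmn : m ≤ n) :
    ((n - 1).choose (m - 1) : ℝ) / n.choose m = m / n := by
  obtain ⟨n, rfl⟩ : ∃ k, n = k + 1 := ⟨n - 1, by omega⟩
  obtain ⟨m, rfl⟩ : ∃ k, m = k + 1 := ⟨m - 1, by omega⟩
  have h : ((n + 1 : ℕ) : ℝ) * n.choose m = (n + 1).choose (m + 1) * (m + 1 : ℕ) := by
    exact_mod_cast Nat.add_one_mul_choose_eq n m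
  have hpos : (0 : ℝ) < (n + 1).choose (m + 1) := by exact_mod_cast Nat.choose_pos hmn
  simp only [Nat.add_sub_cancel]
  rw [div_eq_div_iff hpos.ne' (by positivity)]
  linarith

variable {Ω : Type*} [MeasurableSpace Ω] {μ : Measure Ω} {n m : ℕ}
  {S : Ω → Finset (Fin n)}

lemma integral_ite_mem_of_uniform [IsFiniteMeasure μ] (hm : 1 ≤ m) (hmn : m ≤ n)
    (hS : Measurable S)
    (hS_law : ∀ s : Finset (Fin n),
      μ (S ⁻¹' {s}) = if s.card = m then ((n.choose m : ℝ≥0∞))⁻¹ else 0) (i : Fin n) :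
    ∫ ω, (if i ∈ S ω then (1 : ℝ) else 0) ∂μ = m / n := by
  have hlaw : ∀ s, μ.real (S ⁻¹' {s}) = if #s = m then ((n.choose m : ℝ))⁻¹ else 0 :=
    fun s => by
      rw [measureReal_def, hS_law]
      split_ifs <;> simp
  rw [integral_comp_eq_sum_measureReal hS (fun s => if i ∈ s then (1 : ℝ) else 0)]
  simp only [hlaw, mul_ite, mul_one, mul_zero, ← ite_and, sum_ite, sum_const_zero, add_zero,
    sum_const, nsmul_eq_mul]
  rw [card_filter_mem_and_card_eq hm, Fintype.card_fin, ← div_eq_mul_inv,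
    Nat.choose_pred_div_choose hm hmn]

lemma integral_sq_one_div_mul_ite_mem_sub_one_of_uniform [IsProbabilityMeasure μ] (hm : 1 ≤ m)
    (hmn : m ≤ n) (hS : Measurable S)
    (hS_law : ∀ s : Finset (Fin n),
      μ (S ⁻¹' {s}) = if s.card = m then ((n.choose m : ℝ≥0∞))⁻¹ else 0) (i : Fin n) :
    ∫ ω, (1 / (m / n : ℝ) * (if i ∈ S ω then 1 else 0) - 1) ^ 2 ∂μ
      = (1 - m / n) / (m / n : ℝ) :=
  integral_sq_one_div_mul_sub_one_of_sq_eq_self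
    ((memLp_comp_of_finite hS (fun s => if i ∈ s then 1 else 0) 1).integrable le_rfl)
    (fun ω => by split_ifs <;> norm_num) (div_ne_zero (by positivity) (by norm_cast; omega))
    (integral_ite_mem_of_uniform hm hmn hS hS_law i)

end UniformSubset

theorem bootstrap_deviation_mean_variance_general
    {d n : ℕ}
    (φi : Fin n → Fin d → ℝ) (φ : Fin d → ℝ) (lam : ℝ)
    (Λ : Matrix (Fin d) (Fin d) ℝ)
    (hΛ : Λ = lam • (1 : Matrix (Fin d) (Fin d) ℝ) + ∑ i, vecMulVec (φi i) (φi i))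
    {Ω : Type*} [MeasurableSpace Ω] (μ : Measure Ω) [IsProbabilityMeasure μ]
    (ε : Fin n → Ω → ℝ)
    (hε_indep : iIndepFun ε μ)
    (hε_L2 : ∀ i, MemLp (ε i) 2 μ)
    (σ : ℝ)
    (hε_mean : ∀ i, ∫ ω, ε i ω ∂μ = 0)
    (hε_var : ∀ i, ∫ ω, (ε i ω) ^ 2 ∂μ = σ ^ 2)
    (m : ℕ) (hm : 1 ≤ m) (hmn : m ≤ n)
    (ζ : ℝ) (hζ : ζ = (m : ℝ) / n)
    (S : Ω → Finset (Fin n)) (hS_meas : Measurable S)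
    (hS_law : ∀ s : Finset (Fin n),
      μ (S ⁻¹' {s}) = if s.card = m then ((n.choose m : ℝ≥0∞))⁻¹ else 0)
    (hS_indep : IndepFun S (fun ω i => ε i ω) μ)
    (D : Ω → ℝ)
    (hD : ∀ ω, D ω = φ ⬝ᵥ (Λ⁻¹ *ᵥ
      ((1 / ζ) • (∑ i ∈ S ω, ε i ω • φi i) - ∑ i, ε i ω • φi i))) :
    (∫ ω, D ω ∂μ = 0) ∧
    (∫ ω, (D ω) ^ 2 ∂μ
        = ((1 - ζ) / ζ) * σ ^ 2 *
          (φ ⬝ᵥ (Λ⁻¹ *ᵥ ((∑ i, vecMulVec (φi i) (φi i)) *ᵥ (Λ⁻¹ *ᵥ φ))))) := by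
  set a : Fin n → ℝ := fun i => φ ⬝ᵥ (Λ⁻¹ *ᵥ φi i)
  set c : Finset (Fin n) → Fin n → ℝ := fun s i => (1 / ζ * (if i ∈ s then 1 else 0) - 1) * a i
  have hDC : D = fun ω => ∑ i, c (S ω) i * ε i ω :=
    funext fun ω => by rw [hD, dotProduct_mulVec_smul_sum_sub_sum]
  have hc : ∀ i, MemLp (fun ω => c (S ω) i) 2 μ := fun i => memLp_comp_of_finite hS_meas (c · i) 2
  have hcε : IndepFun (fun ω i => c (S ω) i) (fun ω i => ε i ω) μ :=
    hS_indep.comp (Measurable.of_discrete (f := c)) measurable_id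
  have hc2 : ∀ i, ∫ ω, c (S ω) i ^ 2 ∂μ = (1 - ζ) / ζ * a i ^ 2 := fun i => by
    simp_rw [c, mul_pow]
    rw [integral_mul_const, hζ, integral_sq_one_div_mul_ite_mem_sub_one_of_uniform hm hmn hS_meas
      hS_law i]
  have hcorr := hε_indep.integral_mul_eq_ite (fun i => (hε_L2 i).1) hε_mean hε_var
  have hΛinv : Λ⁻¹.IsSymm := (hΛ ▸ isSymm_smul_one_add_sum_vecMulVec lam φi).inv
  refine ⟨hDC ▸ integral_sum_mul_eq_zero_of_indepFun hcε (fun i => (hc i).integrable one_le_two)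
    (fun i => (hε_L2 i).integrable one_le_two) hε_mean, ?_⟩
  rw [hDC, integral_sq_sum_mul_of_indepFun hcε hc hε_L2 hcorr,
    hΛinv.dotProduct_mulVec_sum_vecMulVec_mulVec]
  simp only [hc2, mul_sum]
  exact sum_congr rfl fun i _ => by ring

/-- Variance of the bootstrap deviation under sampling without replacement:
with features `φ_1,…,φ_n ∈ ℝ^d`, query `φ`, `λ > 0`, `Λ = λ·I + Σ_i φ_i φ_iᵀ`, independent
centered noises `ε_i` with `E[ε_i] = 0`, `E[ε_i²] = σ²`, and a random subset `S ⊆ {1,…,n}`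
uniform among subsets of size `m` (`1 ≤ m ≤ n`, `ζ = m/n`) independent of the noises, the
random variable `D = φᵀ Λ⁻¹ ((1/ζ) Σ_{i∈S} φ_i ε_i − Σ_{i=1}^n φ_i ε_i)` has mean zero and
variance `E[D²] = ((1 − ζ)/ζ)·σ²·φᵀ Λ⁻¹ (Σ_i φ_i φ_iᵀ) Λ⁻¹ φ`. -/
theorem bootstrap_deviation_mean_variance
    {d n : ℕ} (hn : 1 ≤ n)
    (φi : Fin n → Fin d → ℝ) (φ : Fin d → ℝ) (lam : ℝ) (hlam : 0 < lam)
    (Λ : Matrix (Fin d) (Fin d) ℝ)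
    (hΛ : Λ = lam • (1 : Matrix (Fin d) (Fin d) ℝ) + ∑ i, vecMulVec (φi i) (φi i))
    {Ω : Type*} [MeasurableSpace Ω] (μ : Measure Ω) [IsProbabilityMeasure μ]
    (ε : Fin n → Ω → ℝ) (hε_meas : ∀ i, Measurable (ε i))
    (hε_indep : iIndepFun ε μ)
    (hε_L2 : ∀ i, MemLp (ε i) 2 μ)
    (σ : ℝ)
    (hε_mean : ∀ i, ∫ ω, ε i ω ∂μ = 0)
    (hε_var : ∀ i, ∫ ω, (ε i ω) ^ 2 ∂μ = σ ^ 2)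
    (m : ℕ) (hm : 1 ≤ m) (hmn : m ≤ n)
    (ζ : ℝ) (hζ : ζ = (m : ℝ) / n)
    (S : Ω → Finset (Fin n)) (hS_meas : Measurable S)
    (hS_law : ∀ s : Finset (Fin n),
      μ (S ⁻¹' {s}) = if s.card = m then ((n.choose m : ℝ≥0∞))⁻¹ else 0)
    (hS_indep : IndepFun S (fun ω i => ε i ω) μ)
    (D : Ω → ℝ)
    (hD : ∀ ω, D ω = φ ⬝ᵥ (Λ⁻¹ *ᵥ
      ((1 / ζ) • (∑ i ∈ S ω, ε i ω • φi i) - ∑ i, ε i ω • φi i))) :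
    (∫ ω, D ω ∂μ = 0) ∧
    (∫ ω, (D ω) ^ 2 ∂μ
        = ((1 - ζ) / ζ) * σ ^ 2 *
          (φ ⬝ᵥ (Λ⁻¹ *ᵥ ((∑ i, vecMulVec (φi i) (φi i)) *ᵥ (Λ⁻¹ *ᵥ φ))))) :=
  bootstrap_deviation_mean_variance_general φi φ lam Λ hΛ μ ε hε_indep hε_L2 σ hε_mean hε_var m hm
    hmn ζ hζ S hS_meas hS_law hS_indep D hD
end
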